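/- Let f : 2^E → ℤ be submodular with f(∅) = 0 and f(S) ≥ 0 for all S ⊆ E, and let d ∈ ℤ^n have at least one strictly positive coordinate. Then there exists C₀ > 0 such that for all C ≥ C₀: inf{F̂(x;C) : x ∈ ℝ^{n+1}, ⟨d, x_{[n]}⟩ = 1, x_{n+1} = 0} = inf{F(x) : x ∈ ℝ^n, x ≥ 0 coordinatewise, ⟨d, x⟩ = 1}, where F is the Lovász extension of f and F̂(·;C) is the Lovász extension of the lifted function f̂(·;C). -/
import Mathlib


open Finset

/-- `f : 2^E → ℝ` is submodular if `f(S ∩ T) + f(S ∪ T) ≤ f(S) + f(T)` for all `S, T`. -/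
def Submodular {m : ℕ} (f : Finset (Fin m) → ℝ) : Prop :=
  ∀ S T : Finset (Fin m), f (S ∩ T) + f (S ∪ T) ≤ f S + f T

/-- The extended polymatroid `P(f) = {x : x(S) ≤ f(S) for all S}`. -/
def extPolymatroid {m : ℕ} (f : Finset (Fin m) → ℝ) : Set (Fin m → ℝ) :=
  {x | ∀ S : Finset (Fin m), ∑ i ∈ S, x i ≤ f S}

/-- The base polytope `B(f) = {x ∈ P(f) : x(E) = f(E)}`. -/
def basePoly {m : ℕ} (f : Finset (Fin m) → ℝ) : Set (Fin m → ℝ) :=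
  {x | (∀ S : Finset (Fin m), ∑ i ∈ S, x i ≤ f S) ∧ ∑ i, x i = f univ}

/-- The Lovász extension `F(x) = sup {⟨v, x⟩ : v ∈ B(f)}`. -/
noncomputable def lovasz {m : ℕ} (f : Finset (Fin m) → ℝ) (x : Fin m → ℝ) : ℝ :=
  sSup ((fun v : Fin m → ℝ => ∑ i, v i * x i) '' basePoly f)

section Greedy

variable {m : ℕ}

/-- prefix sets of a permutation -/
def Aset (σ : Equiv.Perm (Fin m)) (k : ℕ) : Finset (Fin m) :=
  univ.filter fun i => ((σ.symm i : Fin m) : ℕ) < k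

lemma mem_Aset {σ : Equiv.Perm (Fin m)} {k : ℕ} {i : Fin m} :
    i ∈ Aset σ k ↔ ((σ.symm i : Fin m) : ℕ) < k := by simp [Aset]

lemma Aset_zero (σ : Equiv.Perm (Fin m)) : Aset σ 0 = ∅ := by
  ext i; simp [mem_Aset]

lemma Aset_full (σ : Equiv.Perm (Fin m)) {k : ℕ} (hk : m ≤ k) : Aset σ k = univ := by
  ext i; simp only [mem_Aset, mem_univ, iff_true]
  exact lt_of_lt_of_le (σ.symm i).isLt hk

lemma Aset_succ (σ : Equiv.Perm (Fin m)) (j : Fin m) :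
    Aset σ ((j : ℕ) + 1) = insert (σ j) (Aset σ (j : ℕ)) := by
  ext i
  simp only [mem_Aset, Finset.mem_insert, Nat.lt_succ_iff_lt_or_eq]
  constructor
  · rintro (h | h)
    · exact Or.inr h
    · left
      have : σ.symm i = j := Fin.ext h
      rw [← this, Equiv.apply_symm_apply]
  · rintro (h | h)
    · right; rw [h, Equiv.symm_apply_apply]
    · exact Or.inl h

lemma not_mem_Aset (σ : Equiv.Perm (Fin m)) (j : Fin m) : σ j ∉ Aset σ (j : ℕ) := by
  simp [mem_Aset]

lemma sum_Aset_succ (σ : Equiv.Perm (Fin m)) (g : Fin m → ℝ) (j : Fin m) :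
    ∑ i ∈ Aset σ ((j : ℕ) + 1), g i = g (σ j) + ∑ i ∈ Aset σ (j : ℕ), g i := by
  rw [Aset_succ, Finset.sum_insert (not_mem_Aset σ j)]

/-- greedy vertex for order σ -/
noncomputable def gw (f : Finset (Fin m) → ℝ) (σ : Equiv.Perm (Fin m)) : Fin m → ℝ :=
  fun i => f (Aset σ ((σ.symm i : ℕ) + 1)) - f (Aset σ (σ.symm i : ℕ))

lemma gw_apply (f : Finset (Fin m) → ℝ) (σ : Equiv.Perm (Fin m)) (j : Fin m) :
    gw f σ (σ j) = f (Aset σ ((j : ℕ) + 1)) - f (Aset σ (j : ℕ)) := by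
  simp [gw]

lemma sum_reindex (σ : Equiv.Perm (Fin m)) (S : Finset (Fin m)) (g : Fin m → ℝ) :
    ∑ i ∈ S, g i = ∑ j : Fin m, (if σ j ∈ S then g (σ j) else 0) := by
  rw [Equiv.sum_comp σ (fun i => if i ∈ S then g i else 0), Finset.sum_ite_mem,
    univ_inter]

lemma gw_mem_base {f : Finset (Fin m) → ℝ} (hsub : Submodular f) (hf0 : f ∅ = 0)
    (σ : Equiv.Perm (Fin m)) : gw f σ ∈ basePoly f := by
  constructor
  · intro S
    rw [sum_reindex σ S (gw f σ)]
    have key : ∀ j : Fin m, (if σ j ∈ S then gw f σ (σ j) else 0) ≤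
        f (S ∩ Aset σ ((j : ℕ) + 1)) - f (S ∩ Aset σ (j : ℕ)) := by
      intro j
      by_cases hj : σ j ∈ S
      · rw [if_pos hj, gw_apply]
        have h1 : Aset σ (j : ℕ) ∩ (S ∩ Aset σ ((j : ℕ) + 1)) = S ∩ Aset σ (j : ℕ) := by
          ext i
          simp only [Finset.mem_inter, Aset_succ, Finset.mem_insert]
          constructor
          · rintro ⟨hA, _, _⟩; exact ⟨‹i ∈ S›, hA⟩
          · rintro ⟨hS, hA⟩; exact ⟨hA, hS, Or.inr hA⟩
        have h2 : Aset σ (j : ℕ) ∪ (S ∩ Aset σ ((j : ℕ) + 1)) = Aset σ ((j : ℕ) + 1) := by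
          ext i
          simp only [Finset.mem_union, Finset.mem_inter, Aset_succ, Finset.mem_insert]
          constructor
          · rintro (hA | ⟨_, h⟩)
            · exact Or.inr hA
            · exact h
          · rintro (h | hA)
            · exact Or.inr ⟨h ▸ hj, Or.inl h⟩
            · exact Or.inl hA
        have := hsub (Aset σ (j : ℕ)) (S ∩ Aset σ ((j : ℕ) + 1))
        rw [h1, h2] at this
        linarith
      · rw [if_neg hj]
        have : S ∩ Aset σ ((j : ℕ) + 1) = S ∩ Aset σ (j : ℕ) := by
          rw [Aset_succ, Finset.inter_insert_of_notMem hj]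
        rw [this]
        simp
    calc ∑ j : Fin m, (if σ j ∈ S then gw f σ (σ j) else 0)
        ≤ ∑ j : Fin m, (f (S ∩ Aset σ ((j : ℕ) + 1)) - f (S ∩ Aset σ (j : ℕ))) :=
          Finset.sum_le_sum fun j _ => key j
      _ = ∑ k ∈ range m, (f (S ∩ Aset σ (k + 1)) - f (S ∩ Aset σ k)) :=
          Fin.sum_univ_eq_sum_range (fun k => f (S ∩ Aset σ (k + 1)) - f (S ∩ Aset σ k)) m
      _ = f (S ∩ Aset σ m) - f (S ∩ Aset σ 0) :=
          Finset.sum_range_sub (fun k => f (S ∩ Aset σ k)) m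
      _ = f S := by rw [Aset_full σ le_rfl, Aset_zero, Finset.inter_univ,
          Finset.inter_empty, hf0, sub_zero]
  · rw [show (∑ i, gw f σ i) = ∑ i ∈ univ, gw f σ i from rfl,
      sum_reindex σ univ (gw f σ)]
    have : ∀ j : Fin m, (if σ j ∈ univ then gw f σ (σ j) else 0) =
        f (Aset σ ((j : ℕ) + 1)) - f (Aset σ (j : ℕ)) := by
      intro j; rw [if_pos (mem_univ _), gw_apply]
    rw [Finset.sum_congr rfl (fun j _ => this j),
      Fin.sum_univ_eq_sum_range (fun k => f (Aset σ (k + 1)) - f (Aset σ k)) m,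
      Finset.sum_range_sub (fun k => f (Aset σ k)) m,
      Aset_full σ le_rfl, Aset_zero, hf0, sub_zero]

end Greedy

section Abel

variable {m : ℕ}

/-- sorted values extended by 0 -/
noncomputable def uu (σ : Equiv.Perm (Fin m)) (x : Fin m → ℝ) : ℕ → ℝ :=
  fun k => if h : k < m then x (σ ⟨k, h⟩) else 0

lemma abel_identity (σ : Equiv.Perm (Fin m)) (x : Fin m → ℝ) (g : Fin m → ℝ) :
    ∑ i, g i * x i = ∑ k ∈ Finset.range m,
      (uu σ x k - uu σ x (k + 1)) * (∑ i ∈ Aset σ (k + 1), g i) := by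
  set G : ℕ → ℝ := fun k => ∑ i ∈ Aset σ k, g i with hG
  have hGsucc : ∀ j : Fin m, G ((j : ℕ) + 1) - G (j : ℕ) = g (σ j) := by
    intro j; rw [hG]; simp only; rw [sum_Aset_succ]; ring
  have step1 : ∑ i, g i * x i = ∑ k ∈ Finset.range m, (G (k + 1) - G k) * uu σ x k := by
    rw [← Equiv.sum_comp σ (fun i => g i * x i),
      ← Fin.sum_univ_eq_sum_range (fun k => (G (k + 1) - G k) * uu σ x k) m]
    apply Finset.sum_congr rfl
    intro j _
    rw [hGsucc j]
    congr 1
    simp only [uu, dif_pos j.isLt, Fin.eta]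
  rw [step1]
  have key : ∑ k ∈ Finset.range m,
      ((G (k + 1) - G k) * uu σ x k - (uu σ x k - uu σ x (k + 1)) * G (k + 1)) =
      uu σ x m * G m - uu σ x 0 * G 0 := by
    rw [← Finset.sum_range_sub (fun k => uu σ x k * G k) m]
    apply Finset.sum_congr rfl
    intro k _
    ring
  have hum : uu σ x m = 0 := by simp [uu]
  have hG0 : G 0 = 0 := by simp [hG, Aset_zero]
  rw [hum, hG0] at key
  have := Finset.sum_sub_distrib (s := Finset.range m)
    (f := fun k => (G (k + 1) - G k) * uu σ x k)
    (g := fun k => (uu σ x k - uu σ x (k + 1)) * G (k + 1))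
  rw [key] at this
  simp only [zero_mul, mul_zero, sub_zero] at this
  linarith [this]

lemma uu_diff_nonneg {σ : Equiv.Perm (Fin m)} {x : Fin m → ℝ} (hx : ∀ i, 0 ≤ x i)
    (hmono : ∀ j k : Fin m, j ≤ k → x (σ k) ≤ x (σ j)) (k : ℕ) :
    0 ≤ uu σ x k - uu σ x (k + 1) := by
  unfold uu
  by_cases h1 : k + 1 < m
  · have h0 : k < m := Nat.lt_of_succ_lt h1
    rw [dif_pos h0, dif_pos h1]
    have := hmono ⟨k, h0⟩ ⟨k + 1, h1⟩ (by simp [Fin.le_def])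
    linarith
  · rw [dif_neg h1]
    by_cases h0 : k < m
    · rw [dif_pos h0]; simpa using hx _
    · rw [dif_neg h0]; simp

lemma gw_sum_Aset {f : Finset (Fin m) → ℝ} (hf0 : f ∅ = 0) (σ : Equiv.Perm (Fin m))
    (k : ℕ) : ∑ i ∈ Aset σ k, gw f σ i = f (Aset σ k) := by
  induction k with
  | zero => rw [Aset_zero]; simp [hf0]
  | succ k ih =>
      by_cases h : k < m
      · have : Aset σ (k + 1) = Aset σ (((⟨k, h⟩ : Fin m) : ℕ) + 1) := rfl
        rw [this, sum_Aset_succ, gw_apply, ih]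
        ring
      · have h1 : Aset σ (k + 1) = Aset σ k := by
          rw [Aset_full σ (Nat.le_of_not_lt h), Aset_full σ (Nat.le_succ_of_le (Nat.le_of_not_lt h))]
        rw [h1, ih]

/-- The greedy vertex maximizes ⟨·, x⟩ over the extended polymatroid when x ≥ 0 sorted. -/
lemma greedy_opt {f : Finset (Fin m) → ℝ} (hf0 : f ∅ = 0)
    {σ : Equiv.Perm (Fin m)} {x : Fin m → ℝ} (hx : ∀ i, 0 ≤ x i)
    (hmono : ∀ j k : Fin m, j ≤ k → x (σ k) ≤ x (σ j))
    {v : Fin m → ℝ} (hv : v ∈ extPolymatroid f) :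
    ∑ i, v i * x i ≤ ∑ i, gw f σ i * x i := by
  rw [abel_identity σ x v, abel_identity σ x (gw f σ)]
  apply Finset.sum_le_sum
  intro k _
  apply mul_le_mul_of_nonneg_left _ (uu_diff_nonneg hx hmono k)
  rw [gw_sum_Aset hf0 σ]
  exact hv _

lemma greedy_nonneg {f : Finset (Fin m) → ℝ} (hf0 : f ∅ = 0) (hfnn : ∀ S, 0 ≤ f S)
    {σ : Equiv.Perm (Fin m)} {x : Fin m → ℝ} (hx : ∀ i, 0 ≤ x i)
    (hmono : ∀ j k : Fin m, j ≤ k → x (σ k) ≤ x (σ j)) :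
    0 ≤ ∑ i, gw f σ i * x i := by
  rw [abel_identity σ x (gw f σ)]
  apply Finset.sum_nonneg
  intro k _
  apply mul_nonneg (uu_diff_nonneg hx hmono k)
  rw [gw_sum_Aset hf0 σ]
  exact hfnn _

lemma exists_sorting (x : Fin m → ℝ) :
    ∃ σ : Equiv.Perm (Fin m), ∀ j k : Fin m, j ≤ k → x (σ k) ≤ x (σ j) := by
  refine ⟨Tuple.sort (fun i => -x i), fun j k hjk => ?_⟩
  have := Tuple.monotone_sort (fun i => -x i) hjk
  simp only [Function.comp_apply] at this
  linarith

end Abel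

section Lovasz

variable {m : ℕ}

lemma base_coord_bound {f : Finset (Fin m) → ℝ} {v : Fin m → ℝ} (hv : v ∈ basePoly f)
    (i : Fin m) : |v i| ≤ |f {i}| + |f univ| + |f (univ.erase i)| := by
  obtain ⟨hP, hT⟩ := hv
  have hup : v i ≤ f {i} := by
    have := hP {i}; simpa using this
  have hlow : f univ - f (univ.erase i) ≤ v i := by
    have h1 : ∑ j ∈ univ.erase i, v j ≤ f (univ.erase i) := hP _
    have h2 : ∑ j ∈ univ.erase i, v j + v i = ∑ j, v j :=
      Finset.sum_erase_add univ v (mem_univ i)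
    rw [hT] at h2
    linarith
  rw [abs_le]
  constructor
  · have := abs_nonneg (f {i})
    have h1 := le_abs_self (f (univ.erase i))
    have h2 := neg_abs_le (f univ)
    linarith
  · have h1 := le_abs_self (f {i})
    have := abs_nonneg (f univ)
    have := abs_nonneg (f (univ.erase i))
    linarith

lemma lovasz_bddAbove (f : Finset (Fin m) → ℝ) (x : Fin m → ℝ) :
    BddAbove ((fun v : Fin m → ℝ => ∑ i, v i * x i) '' basePoly f) := by
  refine ⟨∑ i, (|f {i}| + |f univ| + |f (univ.erase i)|) * |x i|, ?_⟩
  rintro r ⟨v, hv, rfl⟩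
  apply Finset.sum_le_sum
  intro i _
  calc v i * x i ≤ |v i * x i| := le_abs_self _
    _ = |v i| * |x i| := abs_mul _ _
    _ ≤ (|f {i}| + |f univ| + |f (univ.erase i)|) * |x i| :=
        mul_le_mul_of_nonneg_right (base_coord_bound hv i) (abs_nonneg _)

lemma le_lovasz {f : Finset (Fin m) → ℝ} {v : Fin m → ℝ} (hv : v ∈ basePoly f)
    (x : Fin m → ℝ) : ∑ i, v i * x i ≤ lovasz f x :=
  le_csSup (lovasz_bddAbove f x) ⟨v, hv, rfl⟩

lemma lovasz_le {f : Finset (Fin m) → ℝ} (hne : (basePoly f).Nonempty)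
    {x : Fin m → ℝ} {b : ℝ} (h : ∀ v ∈ basePoly f, ∑ i, v i * x i ≤ b) :
    lovasz f x ≤ b := by
  apply csSup_le (hne.image _)
  rintro r ⟨v, hv, rfl⟩
  exact h v hv

/-- For x ≥ 0, any point of the extended polymatroid is dominated by the Lovász value. -/
lemma inner_le_lovasz_of_nonneg {f : Finset (Fin m) → ℝ} (hsub : Submodular f)
    (hf0 : f ∅ = 0) {x : Fin m → ℝ} (hx : ∀ i, 0 ≤ x i)
    {v : Fin m → ℝ} (hv : v ∈ extPolymatroid f) :
    ∑ i, v i * x i ≤ lovasz f x := by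
  obtain ⟨σ, hσ⟩ := exists_sorting x
  calc ∑ i, v i * x i ≤ ∑ i, gw f σ i * x i := greedy_opt hf0 hx hσ hv
    _ ≤ lovasz f x := le_lovasz (gw_mem_base hsub hf0 σ) x

lemma lovasz_nonneg {f : Finset (Fin m) → ℝ} (hsub : Submodular f)
    (hf0 : f ∅ = 0) (hfnn : ∀ S, 0 ≤ f S) {x : Fin m → ℝ} (hx : ∀ i, 0 ≤ x i) :
    0 ≤ lovasz f x := by
  obtain ⟨σ, hσ⟩ := exists_sorting x
  calc (0 : ℝ) ≤ ∑ i, gw f σ i * x i := greedy_nonneg hf0 hfnn hx hσ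
    _ ≤ lovasz f x := le_lovasz (gw_mem_base hsub hf0 σ) x

lemma lovasz_smul {f : Finset (Fin m) → ℝ} (hne : (basePoly f).Nonempty)
    {s : ℝ} (hs : 0 < s) (x : Fin m → ℝ) :
    lovasz f (fun i => s * x i) = s * lovasz f x := by
  apply le_antisymm
  · apply lovasz_le hne
    intro v hv
    have h1 : ∑ i, v i * (s * x i) = s * ∑ i, v i * x i := by
      rw [Finset.mul_sum]; apply Finset.sum_congr rfl; intros; ring
    rw [h1]
    exact mul_le_mul_of_nonneg_left (le_lovasz hv x) hs.le
  · have h2 : lovasz f x ≤ s⁻¹ * lovasz f (fun i => s * x i) := by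
      apply lovasz_le hne
      intro v hv
      rw [le_inv_mul_iff₀ hs]
      have h1 : s * ∑ i, v i * x i = ∑ i, v i * (s * x i) := by
        rw [Finset.mul_sum]; apply Finset.sum_congr rfl; intros; ring
      rw [h1]
      exact le_lovasz hv _
    calc s * lovasz f x ≤ s * (s⁻¹ * lovasz f (fun i => s * x i)) :=
          mul_le_mul_of_nonneg_left h2 hs.le
      _ = lovasz f (fun i => s * x i) := by field_simp

end Lovasz

/-- The lifted function `f̂(·;C)` on the ground set `Ê = E ∪ {n+1}`:
`f̂(S;C) = f(S)` if `n+1 ∉ S`; `f̂(S;C) = f(S \\ {n+1}) + C` if `n+1 ∈ S` and `S ≠ Ê`;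
and `f̂(Ê;C) = f(E)`. -/
noncomputable def lifted (n : ℕ) (f : Finset (Fin n) → ℝ) (C : ℝ)
    (S : Finset (Fin (n + 1))) : ℝ :=
  if Fin.last n ∈ S then
    (if S = univ then f univ
     else f (univ.filter (fun i : Fin n => i.castSucc ∈ S)) + C)
  else f (univ.filter (fun i : Fin n => i.castSucc ∈ S))

section Lifted

variable {n : ℕ}

lemma sum_split (v : Fin (n + 1) → ℝ) (S : Finset (Fin (n + 1))) :
    ∑ i ∈ S, v i = (∑ i ∈ univ.filter (fun i : Fin n => i.castSucc ∈ S), v i.castSucc)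
      + (if Fin.last n ∈ S then v (Fin.last n) else 0) := by
  have h0 : ∑ i ∈ S, v i = ∑ i : Fin (n + 1), if i ∈ S then v i else 0 := by
    rw [Finset.sum_ite_mem, univ_inter]
  rw [h0, Fin.sum_univ_castSucc]
  congr 1
  rw [Finset.sum_filter]

lemma proj_univ : (univ.filter (fun i : Fin n => i.castSucc ∈ (univ : Finset (Fin (n + 1))))) = univ := by
  simp

lemma sum_sub_ind (w : Fin n → ℝ) (C : ℝ) (j : Fin n) (T : Finset (Fin n)) :
    ∑ i ∈ T, (w i - if i = j then C else 0) =
      (∑ i ∈ T, w i) - (if j ∈ T then C else 0) := by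
  rw [Finset.sum_sub_distrib, Finset.sum_ite_eq' T j (fun _ => C)]

/-- (w, 0) is in the lifted base polytope. -/
lemma snoc_zero_mem {f : Finset (Fin n) → ℝ} {C : ℝ} (hC : 0 ≤ C)
    {w : Fin n → ℝ} (hw : w ∈ basePoly f) :
    Fin.snoc w (0 : ℝ) ∈ basePoly (lifted n f C) := by
  have hsum : ∀ S : Finset (Fin (n + 1)), ∑ i ∈ S, Fin.snoc w (0 : ℝ) i =
      (∑ i ∈ univ.filter (fun i : Fin n => i.castSucc ∈ S), w i)
        + (if Fin.last n ∈ S then (0:ℝ) else 0) := by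
    intro S
    rw [sum_split]
    simp [Fin.snoc_castSucc, Fin.snoc_last]
  constructor
  · intro S
    rw [hsum S]
    unfold lifted
    by_cases h1 : Fin.last n ∈ S
    · rw [if_pos h1]
      by_cases h2 : S = univ
      · rw [if_pos h2, if_pos h1]
        subst h2
        rw [proj_univ]
        simp [hw.2]
      · rw [if_pos h1, if_neg h2]
        have := hw.1 (univ.filter (fun i : Fin n => i.castSucc ∈ S))
        linarith
    · rw [if_neg h1, if_neg h1]
      simpa using hw.1 _
  · have h0 : ∑ i, Fin.snoc w (0:ℝ) i = ∑ i ∈ (univ : Finset (Fin (n+1))), Fin.snoc w (0:ℝ) i := rfl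
    rw [h0, hsum univ, if_pos (mem_univ _), proj_univ]
    unfold lifted
    rw [if_pos (mem_univ _), if_pos rfl]
    simpa using hw.2

/-- (w - C e_j, C) is in the lifted base polytope. -/
lemma snoc_shift_mem {f : Finset (Fin n) → ℝ} {C : ℝ} (hC : 0 ≤ C)
    {w : Fin n → ℝ} (hw : w ∈ basePoly f) (j : Fin n) :
    Fin.snoc (fun i => w i - if i = j then C else 0) C ∈ basePoly (lifted n f C) := by
  have hsum : ∀ S : Finset (Fin (n + 1)),
      ∑ i ∈ S, Fin.snoc (fun i => w i - if i = j then C else 0) C i =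
      ((∑ i ∈ univ.filter (fun i : Fin n => i.castSucc ∈ S), w i)
        - (if j ∈ univ.filter (fun i : Fin n => i.castSucc ∈ S) then C else 0))
        + (if Fin.last n ∈ S then C else 0) := by
    intro S
    rw [sum_split]
    simp only [Fin.snoc_castSucc, Fin.snoc_last]
    rw [sum_sub_ind]
  constructor
  · intro S
    rw [hsum S]
    unfold lifted
    by_cases h1 : Fin.last n ∈ S
    · rw [if_pos h1]
      by_cases h2 : S = univ
      · rw [if_pos h2, if_pos h1]
        subst h2
        rw [proj_univ]
        simp [hw.2]
      · rw [if_pos h1, if_neg h2]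
        have := hw.1 (univ.filter (fun i : Fin n => i.castSucc ∈ S))
        by_cases h3 : j ∈ univ.filter (fun i : Fin n => i.castSucc ∈ S)
        · rw [if_pos h3]; linarith
        · rw [if_neg h3]; linarith
    · rw [if_neg h1, if_neg h1]
      have := hw.1 (univ.filter (fun i : Fin n => i.castSucc ∈ S))
      by_cases h3 : j ∈ univ.filter (fun i : Fin n => i.castSucc ∈ S)
      · rw [if_pos h3]; linarith
      · rw [if_neg h3]; linarith
  · have h0 : ∑ i, Fin.snoc (fun i => w i - if i = j then C else 0) C i
        = ∑ i ∈ (univ : Finset (Fin (n+1))), Fin.snoc (fun i => w i - if i = j then C else 0) C i := rfl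
    rw [h0, hsum univ, if_pos (mem_univ _), proj_univ, if_pos (mem_univ _)]
    unfold lifted
    rw [if_pos (mem_univ _), if_pos rfl]
    have := hw.2
    linarith

/-- Projection of a lifted base point lies in the extended polymatroid of f. -/
lemma proj_mem_ext {f : Finset (Fin n) → ℝ} {C : ℝ}
    {v : Fin (n + 1) → ℝ} (hv : v ∈ basePoly (lifted n f C)) :
    (fun i : Fin n => v i.castSucc) ∈ extPolymatroid f := by
  intro S
  have h1 : ∑ i ∈ S, v i.castSucc = ∑ i ∈ S.map Fin.castSuccEmb, v i := by
    rw [Finset.sum_map]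
    rfl
  have hlast : Fin.last n ∉ S.map Fin.castSuccEmb := by
    intro h
    obtain ⟨i, _, hi⟩ := Finset.mem_map.mp h
    exact absurd hi (Fin.castSucc_lt_last i).ne
  have hproj : univ.filter (fun i : Fin n => i.castSucc ∈ S.map Fin.castSuccEmb) = S := by
    ext i
    simp only [Finset.mem_filter, mem_univ, true_and]
    exact Finset.mem_map' Fin.castSuccEmb
  have h2 := hv.1 (S.map Fin.castSuccEmb)
  rw [h1]
  unfold lifted at h2
  rw [if_neg hlast, hproj] at h2
  exact h2

lemma inner_split (v : Fin (n + 1) → ℝ) {x : Fin (n + 1) → ℝ}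
    (hlast : x (Fin.last n) = 0) :
    ∑ i, v i * x i = ∑ i : Fin n, v i.castSucc * x i.castSucc := by
  rw [Fin.sum_univ_castSucc (fun i => v i * x i), hlast]
  simp

end Lifted

set_option maxHeartbeats 1600000

/-- For all sufficiently large `C`, minimizing the lifted Lovász extension over the
hyperplane `⟨d, x_{[n]}⟩ = 1, x_{n+1} = 0` equals minimizing the Lovász extension of `f`
over the nonnegative orthant intersected with `⟨d, x⟩ = 1`. -/
theorem lifted_constrained_eq_orthant (n : ℕ) (hn : 1 ≤ n) (f : Finset (Fin n) → ℤ)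
    (hsub : Submodular (fun S => (f S : ℝ))) (hf0 : f ∅ = 0)
    (hfnn : ∀ S, 0 ≤ (f S : ℝ))
    (d : Fin n → ℤ) (hd : ∃ i, 0 < d i) :
    ∃ C₀ : ℝ, 0 < C₀ ∧ ∀ C : ℝ, C₀ ≤ C →
      sInf {r : ℝ | ∃ x : Fin (n + 1) → ℝ,
          (∑ i : Fin n, (d i : ℝ) * x i.castSucc) = 1 ∧ x (Fin.last n) = 0 ∧
          r = lovasz (lifted n (fun S => (f S : ℝ)) C) x} =
        sInf {r : ℝ | ∃ x : Fin n → ℝ, (∀ i, 0 ≤ x i) ∧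
          (∑ i, (d i : ℝ) * x i) = 1 ∧ r = lovasz (fun S => (f S : ℝ)) x} := by
  classical
  set g : Finset (Fin n) → ℝ := fun S => (f S : ℝ) with hgdef
  have hg0 : g ∅ = 0 := by
    show ((f ∅ : ℤ) : ℝ) = 0
    exact_mod_cast congrArg (fun z : ℤ => (z : ℝ)) hf0
  have hgnn : ∀ S, 0 ≤ g S := hfnn
  have hBne : (basePoly g).Nonempty := ⟨gw g (Equiv.refl _), gw_mem_base hsub hg0 _⟩
  set K : Fin n → ℝ := fun i => |g {i}| + |g univ| + |g (univ.erase i)| with hK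
  set L : ℝ := ∑ i : Fin n, K i with hL
  have hKnn : ∀ i, 0 ≤ K i := fun i => by
    show (0:ℝ) ≤ |g {i}| + |g univ| + |g (univ.erase i)|
    positivity
  have hLnn : 0 ≤ L := Finset.sum_nonneg fun i _ => hKnn i
  -- the ℓ¹-type bound for base points
  have hl1 : ∀ v ∈ basePoly g, ∀ z : Fin n → ℝ, ∀ t : ℝ, (∀ i, 0 ≤ z i) →
      (∀ i, z i ≤ t) → ∑ i, v i * z i ≤ L * t := by
    intro v hv z t hznn hzt
    calc ∑ i, v i * z i ≤ ∑ i, K i * t := by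
          apply Finset.sum_le_sum
          intro i _
          calc v i * z i ≤ |v i| * z i :=
                mul_le_mul_of_nonneg_right (le_abs_self _) (hznn i)
            _ ≤ K i * z i := mul_le_mul_of_nonneg_right (base_coord_bound hv i) (hznn i)
            _ ≤ K i * t := mul_le_mul_of_nonneg_left (hzt i) (hKnn i)
      _ = L * t := by rw [hL, Finset.sum_mul]
  set D : ℝ := ∑ i : Fin n, |(d i : ℝ)| with hD
  obtain ⟨i₀, hi₀⟩ := hd
  have hdi₀ : (1 : ℝ) ≤ (d i₀ : ℝ) := by exact_mod_cast hi₀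
  have hD1 : (1 : ℝ) ≤ D :=
    le_trans (le_trans hdi₀ (le_abs_self _))
      (Finset.single_le_sum (fun i _ => abs_nonneg ((d i : ℝ))) (mem_univ i₀))
  have hDpos : (0 : ℝ) < D := lt_of_lt_of_le one_pos hD1
  set Srhs := {r : ℝ | ∃ x : Fin n → ℝ, (∀ i, 0 ≤ x i) ∧
      (∑ i, (d i : ℝ) * x i) = 1 ∧ r = lovasz g x} with hSrhsdef
  -- a feasible point for the RHS
  set xstar : Fin n → ℝ := fun i => if i = i₀ then ((d i₀ : ℝ))⁻¹ else 0 with hxstar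
  have hdi₀pos : (0 : ℝ) < (d i₀ : ℝ) := lt_of_lt_of_le one_pos hdi₀
  have hxstarnn : ∀ i, 0 ≤ xstar i := by
    intro i; simp only [hxstar]
    split
    · positivity
    · exact le_rfl
  have hxstar1 : (∑ i, (d i : ℝ) * xstar i) = 1 := by
    simp only [hxstar, mul_ite, mul_zero]
    rw [Finset.sum_ite_eq' univ i₀ (fun i => (d i : ℝ) * (d i₀ : ℝ)⁻¹)]
    rw [if_pos (mem_univ i₀)]
    field_simp
  have hrstar : lovasz g xstar ∈ Srhs := ⟨xstar, hxstarnn, hxstar1, rfl⟩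
  have hSrhs_ne : Srhs.Nonempty := ⟨_, hrstar⟩
  have hSrhs_lb : ∀ r ∈ Srhs, (0 : ℝ) ≤ r := by
    rintro r ⟨x, hxnn, -, rfl⟩
    exact lovasz_nonneg hsub hg0 hgnn hxnn
  set I := sInf Srhs with hIdef
  have hI0 : 0 ≤ I := le_csInf hSrhs_ne hSrhs_lb
  have hIle : ∀ r ∈ Srhs, I ≤ r := fun r hr => csInf_le ⟨0, hSrhs_lb⟩ hr
  have hDI : 0 ≤ D * I := mul_nonneg hDpos.le hI0
  refine ⟨L + D * I + 1, by linarith, ?_⟩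
  intro C hC
  have hCnn : (0 : ℝ) ≤ C := by linarith
  set Slhs := {r : ℝ | ∃ x : Fin (n + 1) → ℝ,
      (∑ i : Fin n, (d i : ℝ) * x i.castSucc) = 1 ∧ x (Fin.last n) = 0 ∧
      r = lovasz (lifted n g C) x} with hSlhsdef
  have hBliftne : (basePoly (lifted n g C)).Nonempty := by
    obtain ⟨w, hw⟩ := hBne
    exact ⟨_, snoc_zero_mem hCnn hw⟩
  -- ====== Part II: every LHS value is ≥ I ======
  have key : ∀ r ∈ Slhs, I ≤ r := by
    rintro r ⟨xh, hfeas, hlast, rfl⟩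
    set y : Fin n → ℝ := fun i => xh i.castSucc with hy
    have hune : (univ : Finset (Fin n)).Nonempty := ⟨i₀, mem_univ _⟩
    set p : Fin n → ℝ := fun i => max (-(y i)) 0 with hp
    have hpnn : ∀ i, 0 ≤ p i := fun i => le_max_right _ _
    set t : ℝ := univ.sup' hune p with ht
    have htp : ∀ i, p i ≤ t := fun i => Finset.le_sup' p (mem_univ i)
    have htnn : 0 ≤ t := le_trans (hpnn i₀) (htp i₀)
    set Fh := lovasz (lifted n g C) xh with hFh
    -- inner products with lifted base points
    have hinner0 : ∀ w ∈ basePoly g, ∑ i, w i * y i ≤ Fh := by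
      intro w hw
      have h1 := le_lovasz (snoc_zero_mem hCnn hw) xh
      rw [inner_split _ hlast] at h1
      simp only [Fin.snoc_castSucc] at h1
      exact h1
    have stepA : lovasz g y + C * t ≤ Fh := by
      by_cases ht0 : t = 0
      · rw [ht0, mul_zero, add_zero]
        exact lovasz_le hBne fun w hw => hinner0 w hw
      · have htpos : 0 < t := lt_of_le_of_ne htnn (Ne.symm ht0)
        obtain ⟨j, -, hj⟩ := Finset.exists_mem_eq_sup' hune p
        have hpj : max (-(y j)) 0 = t := hj.symm
        have hyj : y j = -t := by
          rcases max_choice (-(y j)) 0 with h1 | h1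
          · rw [h1] at hpj; linarith
          · rw [h1] at hpj; exact absurd hpj.symm ht0
        have hq : ∀ w ∈ basePoly g, ∑ i, w i * y i ≤ Fh - C * t := by
          intro w hw
          have h1 := le_lovasz (snoc_shift_mem hCnn hw j) xh
          rw [inner_split _ hlast] at h1
          simp only [Fin.snoc_castSucc] at h1
          have h2 : ∑ i : Fin n, (w i - if i = j then C else 0) * xh i.castSucc
              = ∑ i, w i * y i - C * y j := by
            rw [show (∑ i : Fin n, (w i - if i = j then C else 0) * xh i.castSucc)
              = ∑ i : Fin n, (w i * y i - if i = j then C * y i else 0) from ?_,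
              Finset.sum_sub_distrib, Finset.sum_ite_eq' univ j (fun i => C * y i),
              if_pos (mem_univ j)]
            apply Finset.sum_congr rfl
            intro i _
            by_cases hij : i = j <;> simp [hij, hy] <;> ring
          rw [h2, hyj] at h1
          linarith
        have := lovasz_le hBne hq
        linarith
    -- the nonnegative part of y
    set ypos : Fin n → ℝ := fun i => y i + p i with hypos
    have hyposnn : ∀ i, 0 ≤ ypos i := by
      intro i
      have := le_max_left (-(y i)) 0
      simp only [hypos, hp]
      have h2 := le_max_left (-(y i)) 0
      linarith
    have stepB : lovasz g ypos ≤ lovasz g y + L * t := by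
      apply lovasz_le hBne
      intro v hv
      have h1 : ∑ i, v i * ypos i = ∑ i, v i * y i + ∑ i, v i * p i := by
        rw [← Finset.sum_add_distrib]
        apply Finset.sum_congr rfl
        intro i _
        simp only [hypos]; ring
      rw [h1]
      have h2 := le_lovasz hv y
      have h3 := hl1 v hv p t hpnn htp
      linarith
    set s : ℝ := ∑ i, (d i : ℝ) * ypos i with hs
    have hs1 : 1 - D * t ≤ s := by
      have h1 : s = 1 + ∑ i, (d i : ℝ) * p i := by
        rw [hs, ← hfeas, ← Finset.sum_add_distrib]
        apply Finset.sum_congr rfl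
        intro i _
        simp only [hypos, hy]; ring
      have h2 : ∑ i, -(|(d i : ℝ)| * t) ≤ ∑ i, (d i : ℝ) * p i := by
        apply Finset.sum_le_sum
        intro i _
        have ha : |(d i : ℝ) * p i| ≤ |(d i : ℝ)| * t := by
          rw [abs_mul, abs_of_nonneg (hpnn i)]
          exact mul_le_mul_of_nonneg_left (htp i) (abs_nonneg _)
        have := neg_abs_le ((d i : ℝ) * p i)
        linarith
      have h3 : ∑ i, -(|(d i : ℝ)| * t) = -(D * t) := by
        rw [Finset.sum_neg_distrib, hD, Finset.sum_mul]
      rw [h3] at h2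
      linarith
    by_cases hspos : 0 < s
    · -- rescale ypos to a feasible RHS point
      set z : Fin n → ℝ := fun i => ypos i / s with hz
      have hznn : ∀ i, 0 ≤ z i := fun i => div_nonneg (hyposnn i) hspos.le
      have hz1 : (∑ i, (d i : ℝ) * z i) = 1 := by
        have h1 : ∑ i, (d i : ℝ) * z i = (∑ i, (d i : ℝ) * ypos i) / s := by
          rw [Finset.sum_div]
          apply Finset.sum_congr rfl
          intro i _
          simp only [hz]; ring
        rw [h1, ← hs, div_self hspos.ne']
      have e1 : I ≤ lovasz g z := hIle _ ⟨z, hznn, hz1, rfl⟩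
      have e2 : lovasz g ypos = s * lovasz g z := by
        have hfun : ypos = fun i => s * z i := by
          funext i
          simp only [hz]
          field_simp
        rw [hfun, lovasz_smul hBne hspos]
      have e5 : s * I ≤ s * lovasz g z := mul_le_mul_of_nonneg_left e1 hspos.le
      have e6 : (1 - D * t) * I ≤ s * I := mul_le_mul_of_nonneg_right hs1 hI0
      have e7 : 0 ≤ t * (C - L - D * I) := mul_nonneg htnn (by linarith)
      linarith [e6, e5, e2, stepB, stepA, e7]
    · push_neg at hspos
      have hDt1 : 1 ≤ D * t := by linarith
      have e1 : 0 ≤ lovasz g ypos := lovasz_nonneg hsub hg0 hgnn hyposnn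
      have e2 : 0 ≤ I * (D * t - 1) := mul_nonneg hI0 (by linarith)
      have e3 : D * I + 1 ≤ C - L := by linarith
      -- Fh ≥ lovasz g y + C t ≥ lovasz ypos - L t + C t ≥ (C - L) t ≥ (DI+1) t ≥ I
      have e4 : (C - L) * t - I ≥ 0 := by
        have h5 := mul_le_mul_of_nonneg_right e3 htnn
        nlinarith [h5, e2, htnn]
      linarith [stepA, stepB, e4]
  have hSlhs_bdd : BddBelow Slhs := ⟨I, fun r hr => key r hr⟩
  -- ====== Part I: conclude ======
  apply le_antisymm
  · apply le_csInf hSrhs_ne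
    rintro r ⟨x, hxnn, hx1, rfl⟩
    set xh : Fin (n + 1) → ℝ := Fin.snoc x 0 with hxh
    have hfeas : (∑ i : Fin n, (d i : ℝ) * xh i.castSucc) = 1 := by
      simp only [hxh, Fin.snoc_castSucc]
      exact hx1
    have hlast : xh (Fin.last n) = 0 := by simp [hxh]
    have hmem : lovasz (lifted n g C) xh ∈ Slhs := ⟨xh, hfeas, hlast, rfl⟩
    have hle : lovasz (lifted n g C) xh ≤ lovasz g x := by
      apply lovasz_le hBliftne
      intro v hv
      rw [inner_split _ hlast]
      have h1 : ∑ i : Fin n, v i.castSucc * xh i.castSucc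
          = ∑ i : Fin n, v i.castSucc * x i := by
        apply Finset.sum_congr rfl
        intro i _
        simp [hxh]
      rw [h1]
      exact inner_le_lovasz_of_nonneg hsub hg0 hxnn (proj_mem_ext hv)
    exact le_trans (csInf_le hSlhs_bdd hmem) hle
  · have hSlhs_ne : Slhs.Nonempty := by
      refine ⟨lovasz (lifted n g C) (Fin.snoc xstar 0), Fin.snoc xstar 0, ?_, by simp, rfl⟩
      simp only [Fin.snoc_castSucc]
      exact hxstar1
    exact le_csInf hSlhs_ne key
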